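/- Let c > −1. For u in the domain of the Neumann Bessel operator B^n on L²((0,∞), y^c dy), one has lim_{y→0} y^c u'(y) = 0. -/

import Mathlib

open MeasureTheory Set Filter Topology
open scoped ENNReal

/-- The weighted measure `y^c dy` on `(0, ∞)`. -/
noncomputable def weightedHalfLine (c : ℝ) : Measure ℝ :=
  ((volume : Measure ℝ).restrict (Set.Ioi 0)).withDensity fun y => ENNReal.ofReal (y ^ c)

/-!
For `v ∈ H¹_c`, the product rule gives `(y^c u' v)' = (B u · v + u' v') y^c`, which is integrable
on `(0, ∞)` by Cauchy–Schwarz, and so is `y^c u' v`. Hence `y^c u' v` tends to `0` at infinity and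
to `-∫₀^∞ (B u · v + u' v') y^c dy` at `0⁺`, and this integral vanishes by the weak formulation.
The test function `v = e^{-y}` lies in `H¹_c` because `c > -1`, and `v(0⁺) = 1`.
-/

theorem tendsto_nhdsGT_of_hasDerivAt_of_integrableOn_Ioi {E : Type*} [NormedAddCommGroup E]
    [NormedSpace ℝ E] [CompleteSpace E] {f f' : ℝ → E} {a : ℝ}
    (hderiv : ∀ x ∈ Ioi a, HasDerivAt f (f' x) x)
    (f'int : IntegrableOn f' (Ioi a)) (fint : IntegrableOn f (Ioi a)) :
    Tendsto f (𝓝[>] a) (𝓝 (-∫ x in Ioi a, f' x)) := by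
  have hf_top : Tendsto f atTop (𝓝 0) :=
    tendsto_zero_of_hasDerivAt_of_integrableOn_Ioi hderiv f'int fint
  have hf_eq : ∀ x ∈ Ioi a, f x = -∫ t in Ioi x, f' t := fun x (hx : a < x) => by
    rw [integral_Ioi_of_hasDerivAt_of_tendsto (hderiv x hx).continuousAt.continuousWithinAt
      (fun y (hy : x < y) => hderiv y (hx.trans hy)) (f'int.mono_set (Ioi_subset_Ioi hx.le))
      hf_top, zero_sub, neg_neg]
  have hsplit : ∀ x ∈ Ioi a,
      ∫ t in Ioi x, f' t = (∫ t in Ioi a, f' t) - ∫ t in a..x, f' t := fun x (hx : a < x) => by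
    rw [intervalIntegral.integral_of_le hx.le, ← Ioc_union_Ioi_eq_Ioi hx.le,
      setIntegral_union (Ioc_disjoint_Ioi le_rfl) measurableSet_Ioi
        (f'int.mono_set Ioc_subset_Ioi_self) (f'int.mono_set (Ioi_subset_Ioi hx.le)),
      add_sub_cancel_left]
  have hprim : Tendsto (fun x => ∫ t in a..x, f' t) (𝓝[>] a) (𝓝 0) := by
    have hcont : ContinuousWithinAt (fun x => ∫ t in a..x, f' t) (Icc a (a + 1)) a :=
      intervalIntegral.continuousWithinAt_primitive (measure_singleton a) (by
        rw [min_self, max_eq_right (by linarith), intervalIntegrable_iff_integrableOn_Ioc_of_le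
          (by linarith)]
        exact f'int.mono_set Ioc_subset_Ioi_self)
    rw [ContinuousWithinAt, intervalIntegral.integral_same] at hcont
    rw [← nhdsWithin_Ioc_eq_nhdsGT (lt_add_one a)]
    exact hcont.mono_left (nhdsWithin_mono _ Ioc_subset_Icc_self)
  have hlim := (hprim.const_sub (∫ t in Ioi a, f' t)).neg
  rw [sub_zero] at hlim
  refine hlim.congr' ?_
  filter_upwards [self_mem_nhdsWithin] with x hx
  rw [hf_eq x hx, hsplit x hx]

noncomputable def besselOperator (c : ℝ) (u : ℝ → ℝ) (y : ℝ) : ℝ :=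
  deriv (deriv u) y + (c / y) * deriv u y

theorem hasDerivAt_rpow_mul_deriv_mul {c y : ℝ} {u v : ℝ → ℝ} (hy : 0 < y)
    (hu : DifferentiableAt ℝ (deriv u) y) (hv : DifferentiableAt ℝ v y) :
    HasDerivAt (fun y => y ^ c * deriv u y * v y)
      (besselOperator c u y * v y * y ^ c + deriv u y * deriv v y * y ^ c) y := by
  refine (((Real.hasDerivAt_rpow_const (Or.inl hy.ne')).mul hu.hasDerivAt).mul
    hv.hasDerivAt).congr_deriv ?_
  simp only [Pi.mul_apply, besselOperator, Real.rpow_sub_one hy.ne']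
  field_simp
  ring

namespace weightedHalfLine

variable {c : ℝ}

theorem integrable_iff {f : ℝ → ℝ} :
    Integrable f (weightedHalfLine c) ↔ IntegrableOn (fun y => f y * y ^ c) (Ioi 0) := by
  rw [weightedHalfLine, integrable_withDensity_iff (by fun_prop)
    (ae_of_all _ fun _ => ENNReal.ofReal_lt_top)]
  refine integrable_congr ?_
  filter_upwards [ae_restrict_mem measurableSet_Ioi] with y (hy : 0 < y)
  rw [ENNReal.toReal_ofReal (Real.rpow_nonneg hy.le c)]

theorem integrableOn_mul_mul_rpow {f g : ℝ → ℝ} (hf : MemLp f 2 (weightedHalfLine c))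
    (hg : MemLp g 2 (weightedHalfLine c)) :
    IntegrableOn (fun y => f y * g y * y ^ c) (Ioi 0) :=
  integrable_iff.1 (hf.integrable_mul hg)

theorem memLp_exp_neg (hc : -1 < c) :
    MemLp (fun y => Real.exp (-y)) 2 (weightedHalfLine c) := by
  rw [memLp_two_iff_integrable_sq (by fun_prop), integrable_iff]
  refine (integrableOn_rpow_mul_exp_neg_mul_rpow hc one_pos two_pos).congr_fun
    (fun y _ => ?_) measurableSet_Ioi
  simp only [Real.rpow_one, ← Real.exp_nat_mul]
  norm_num [mul_comm]

end weightedHalfLine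

open weightedHalfLine in
theorem tendsto_rpow_mul_deriv_mul_nhdsGT_zero {c : ℝ} {u v : ℝ → ℝ}
    (hu : ∀ y ∈ Ioi (0 : ℝ), DifferentiableAt ℝ (deriv u) y)
    (hv : ∀ y ∈ Ioi (0 : ℝ), DifferentiableAt ℝ v y)
    (hu' : MemLp (deriv u) 2 (weightedHalfLine c))
    (hBu : MemLp (besselOperator c u) 2 (weightedHalfLine c))
    (hv₂ : MemLp v 2 (weightedHalfLine c)) (hv' : MemLp (deriv v) 2 (weightedHalfLine c)) :
    Tendsto (fun y => y ^ c * deriv u y * v y) (𝓝[>] 0)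
      (𝓝 (-((∫ y in Ioi 0, besselOperator c u y * v y * y ^ c) +
        ∫ y in Ioi 0, deriv u y * deriv v y * y ^ c))) := by
  have hBuv := integrableOn_mul_mul_rpow hBu hv₂
  have hu'v' := integrableOn_mul_mul_rpow hu' hv'
  rw [← integral_add hBuv hu'v']
  refine tendsto_nhdsGT_of_hasDerivAt_of_integrableOn_Ioi
    (fun y hy => hasDerivAt_rpow_mul_deriv_mul hy (hu y hy) (hv y hy)) (hBuv.add hu'v') ?_
  exact (integrableOn_mul_mul_rpow hu' hv₂).congr_fun (fun y _ => by ring) measurableSet_Ioi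

theorem neumann_bessel_boundary_limit_general (c : ℝ) (hc : -1 < c) (u : ℝ → ℝ)
    (hd2 : ∀ y ∈ Set.Ioi (0:ℝ), DifferentiableAt ℝ (deriv u) y)
    (hu' : MemLp (deriv u) 2 (weightedHalfLine c))
    (hBu : MemLp (fun y => deriv (deriv u) y + (c / y) * deriv u y) 2 (weightedHalfLine c))
    (hweak : ∀ v : ℝ → ℝ, (∀ y ∈ Set.Ioi (0:ℝ), DifferentiableAt ℝ v y) →
      MemLp v 2 (weightedHalfLine c) → MemLp (deriv v) 2 (weightedHalfLine c) →
      ∫ y in Set.Ioi (0:ℝ), deriv u y * deriv v y * y ^ c =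
        - ∫ y in Set.Ioi (0:ℝ), (deriv (deriv u) y + (c / y) * deriv u y) * v y * y ^ c) :
    Tendsto (fun y => y ^ c * deriv u y) (𝓝[>] (0:ℝ)) (𝓝 0) := by
  set v : ℝ → ℝ := fun y => Real.exp (-y)
  have hv_diff : ∀ y ∈ Ioi (0 : ℝ), DifferentiableAt ℝ v y := fun _ _ => by fun_prop
  have hv_deriv : deriv v = -v := funext fun y => by simpa using (hasDerivAt_neg y).exp.deriv
  have hv₂ := weightedHalfLine.memLp_exp_neg hc
  have hv'₂ : MemLp (deriv v) 2 (weightedHalfLine c) := hv_deriv ▸ hv₂.neg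
  have hflux : Tendsto (fun y => y ^ c * deriv u y * v y) (𝓝[>] 0) (𝓝 0) := by
    simpa only [hweak v hv_diff hv₂ hv'₂, besselOperator, add_neg_cancel, neg_zero] using
      tendsto_rpow_mul_deriv_mul_nhdsGT_zero hd2 hv_diff hu' hBu hv₂ hv'₂
  have hv_zero : Tendsto v (𝓝[>] 0) (𝓝 1) := by
    simpa [v] using (continuous_neg.rexp.tendsto 0).mono_left nhdsWithin_le_nhds
  simpa only [zero_div] using (hflux.div hv_zero one_ne_zero).congr
    fun y => mul_div_cancel_right₀ _ (Real.exp_ne_zero _)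

/-- Let `c > -1`. If `u` belongs to the domain of the Neumann Bessel
operator `B^n` on `L²((0,∞), y^c dy)` — i.e. `u ∈ H¹_c`, `u ∈ H²_loc(0,∞)`,
`B u = u'' + (c/y) u' ∈ L²(y^c dy)`, and the weak formulation
`∫₀^∞ u' v' y^c dy = -∫₀^∞ (Bu) v y^c dy` holds for all `v ∈ H¹_c` — then
`lim_{y→0⁺} y^c u'(y) = 0`. -/
theorem neumann_bessel_boundary_limit (c : ℝ) (hc : -1 < c) (u : ℝ → ℝ)
    (hd1 : ∀ y ∈ Set.Ioi (0:ℝ), DifferentiableAt ℝ u y)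
    (hd2 : ∀ y ∈ Set.Ioi (0:ℝ), DifferentiableAt ℝ (deriv u) y)
    (hu : MemLp u 2 (weightedHalfLine c))
    (hu' : MemLp (deriv u) 2 (weightedHalfLine c))
    (hBu : MemLp (fun y => deriv (deriv u) y + (c / y) * deriv u y) 2 (weightedHalfLine c))
    (hweak : ∀ v : ℝ → ℝ, (∀ y ∈ Set.Ioi (0:ℝ), DifferentiableAt ℝ v y) →
      MemLp v 2 (weightedHalfLine c) → MemLp (deriv v) 2 (weightedHalfLine c) →
      ∫ y in Set.Ioi (0:ℝ), deriv u y * deriv v y * y ^ c =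
        - ∫ y in Set.Ioi (0:ℝ), (deriv (deriv u) y + (c / y) * deriv u y) * v y * y ^ c) :
    Tendsto (fun y => y ^ c * deriv u y) (𝓝[>] (0:ℝ)) (𝓝 0) :=
  neumann_bessel_boundary_limit_general c hc u hd2 hu' hBu hweak
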